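/- arXiv:2012.12126 — 2 statements merged into one kernel-verified Lean document; each statement's English description precedes it below -/
import Mathlib

section
/- If a hypergraph H with finite vertex set V and finitely many hyperedges has the local-to-global consistency property for bags, then for every subset W ⊆ V, the reduction R(H[W]) of the hypergraph induced by W on H also has the local-to-global consistency property for bags. -/
variable {A : Type} [DecidableEq A]

/-- The type of `X`-tuples: functions assigning to each attribute `a ∈ X` an element
of its domain `D a`. -/
def Tup (D : A → Type) (X : Finset A) : Type := ∀ a : X, D a.1

/-- Restriction (projection) of an `X`-tuple to `Z ⊆ X`. -/
def Tup.restrict {D : A → Type} {X Z : Finset A} (h : Z ⊆ X) (t : Tup D X) : Tup D Z :=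
  fun a => t ⟨a.1, h a.2⟩

/-- A bag over `X`: a finitely supported function from `X`-tuples to ℕ. -/
abbrev Bag (D : A → Type) (X : Finset A) : Type := Tup D X →₀ ℕ

/-- The marginal of a bag on `Z ⊆ X`. -/
noncomputable def Bag.marginal {D : A → Type} {X Z : Finset A} (h : Z ⊆ X) (R : Bag D X) :
    Bag D Z := Finsupp.mapDomain (Tup.restrict h) R

/-- Two bags are consistent if a common bag over the union of schemas has them as marginals. -/
def Consistent {D : A → Type} {X Y : Finset A} (R : Bag D X) (S : Bag D Y) : Prop :=
  ∃ T : Bag D (X ∪ Y),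
    Bag.marginal Finset.subset_union_left T = R ∧
    Bag.marginal Finset.subset_union_right T = S

/-- A hypergraph: a finite set of vertices together with a finite set of hyperedges. -/
structure FinHypergraph (A : Type) where
  V : Finset A
  E : Finset (Finset A)

/-- The hypergraph induced by `W` on `H`: vertex set `W`, hyperedges the nonempty traces
`X ∩ W` of hyperedges `X` of `H`. -/
def FinHypergraph.induce [DecidableEq A] (H : FinHypergraph A) (W : Finset A) : FinHypergraph A where
  V := W
  E := (H.E.image (fun X => X ∩ W)).filter (fun X => X.Nonempty)

/-- The reduction of a hypergraph: keep exactly the hyperedges that are not properly contained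
in another hyperedge. -/
def FinHypergraph.reduction [DecidableEq A] (H : FinHypergraph A) : FinHypergraph A where
  V := H.V
  E := H.E.filter (fun X => ¬ ∃ Y ∈ H.E, X ⊂ Y)

/-- Global consistency of a collection of bags over the hyperedges of a hypergraph. -/
def GloballyConsistentColl {D : A → Type} (E : Finset (Finset A))
    (R : ∀ X ∈ E, Bag D X) : Prop :=
  ∃ T : Bag D (E.sup id), ∀ (X : Finset A) (hX : X ∈ E),
    Bag.marginal (Finset.le_sup (f := id) hX) T = R X hX

/-- The local-to-global consistency property for bags: every pairwise consistent collection of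
bags over the hyperedges is globally consistent. -/
def LGCBags (D : A → Type) [DecidableEq A] (H : FinHypergraph A) : Prop :=
  ∀ R : ∀ X ∈ H.E, Bag D X,
    (∀ (X : Finset A) (hX : X ∈ H.E) (Y : Finset A) (hY : Y ∈ H.E),
      Consistent (R X hX) (R Y hY)) →
    GloballyConsistentColl H.E R

omit [DecidableEq A] in
theorem Bag.marginal_marginal {D : A → Type} {X Y Z : Finset A} (hZY : Z ⊆ Y) (hYX : Y ⊆ X)
    (T : Bag D X) : Bag.marginal hZY (Bag.marginal hYX T) = Bag.marginal (hZY.trans hYX) T := by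
  simp only [Bag.marginal, ← Finsupp.mapDomain_comp]
  rfl

theorem Consistent.marginal_eq_of_subset {D : A → Type} {X Y : Finset A} {R : Bag D X}
    {S : Bag D Y} (hRS : Consistent R S) (hYX : Y ⊆ X) : Bag.marginal hYX R = S := by
  obtain ⟨U, rfl, rfl⟩ := hRS
  exact Bag.marginal_marginal _ _ U

section Extension

variable {D : A → Type} [∀ a, Nonempty (D a)]

noncomputable def Tup.extend {Z X : Finset A} (t : Tup D Z) : Tup D X :=
  fun a => if h : a.1 ∈ Z then t ⟨a.1, h⟩ else Classical.arbitrary _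

theorem Tup.restrict_extend_of_subset {Z X : Finset A} (hZX : Z ⊆ X) (t : Tup D Z) :
    Tup.restrict hZX (Tup.extend t : Tup D X) = t :=
  funext fun a => dif_pos a.2

theorem Tup.restrict_extend {Z Z' X Y : Finset A} (hYX : Y ⊆ X) (hZ'Z : Z' ⊆ Z)
    (hZ' : ∀ a ∈ Y, a ∈ Z → a ∈ Z') (t : Tup D Z) :
    Tup.restrict hYX (Tup.extend t : Tup D X) = Tup.extend (Tup.restrict hZ'Z t) := by
  funext a
  by_cases ha : a.1 ∈ Z'
  · simp only [Tup.restrict, Tup.extend, dif_pos ha, dif_pos (hZ'Z ha)]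
  · simp only [Tup.restrict, Tup.extend, dif_neg ha, dif_neg (mt (hZ' a.1 a.2) ha)]

noncomputable def Bag.extend {Z X : Finset A} (S : Bag D Z) : Bag D X :=
  Finsupp.mapDomain Tup.extend S

theorem Bag.marginal_extend_of_subset {Z X : Finset A} (hZX : Z ⊆ X) (S : Bag D Z) :
    Bag.marginal hZX (Bag.extend S : Bag D X) = S := by
  simp only [Bag.marginal, Bag.extend, ← Finsupp.mapDomain_comp, Function.comp_def,
    Tup.restrict_extend_of_subset]
  exact Finsupp.mapDomain_id

theorem Bag.marginal_extend {Z Z' X Y : Finset A} (hYX : Y ⊆ X) (hZ'Z : Z' ⊆ Z)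
    (hZ' : ∀ a ∈ Y, a ∈ Z → a ∈ Z') (S : Bag D Z) :
    Bag.marginal hYX (Bag.extend S : Bag D X) = Bag.extend (Bag.marginal hZ'Z S) := by
  simp only [Bag.marginal, Bag.extend, ← Finsupp.mapDomain_comp, Function.comp_def,
    Tup.restrict_extend hYX hZ'Z hZ']

theorem Bag.marginal_extend_marginal_inter {W X Y K : Finset A} (hXY : X ⊆ Y) (hYK : Y ∩ W ⊆ K)
    (U : Bag D K) :
    Bag.marginal hXY (Bag.extend (Bag.marginal hYK U) : Bag D Y) =
      Bag.extend (Bag.marginal ((Finset.inter_subset_inter_right hXY).trans hYK) U) := by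
  rw [Bag.marginal_extend hXY (Finset.inter_subset_inter_right hXY)
    (fun a haX haYW => Finset.mem_inter.2 ⟨haX, (Finset.mem_inter.1 haYW).2⟩),
    Bag.marginal_marginal]

theorem Consistent.extend_marginal_inter {W M N X Y : Finset A} {R : Bag D M} {S : Bag D N}
    (hRS : Consistent R S) (hXM : X ∩ W ⊆ M) (hYN : Y ∩ W ⊆ N) :
    Consistent (Bag.extend (Bag.marginal hXM R) : Bag D X)
      (Bag.extend (Bag.marginal hYN S) : Bag D Y) := by
  obtain ⟨U, rfl, rfl⟩ := hRS
  have hXYMN : (X ∪ Y) ∩ W ⊆ M ∪ N := by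
    rw [Finset.union_inter_distrib_right]
    exact Finset.union_subset_union hXM hYN
  refine ⟨Bag.extend (Bag.marginal hXYMN U), ?_, ?_⟩ <;>
    rw [Bag.marginal_extend_marginal_inter, Bag.marginal_marginal]

end Extension

namespace FinHypergraph

theorem mem_induce_E {H : FinHypergraph A} {W Z : Finset A} :
    Z ∈ (H.induce W).E ↔ (∃ X ∈ H.E, X ∩ W = Z) ∧ Z.Nonempty := by
  simp only [induce, Finset.mem_filter, Finset.mem_image]

theorem reduction_E_subset (H : FinHypergraph A) : H.reduction.E ⊆ H.E :=
  Finset.filter_subset _ _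

theorem exists_mem_reduction_superset {H : FinHypergraph A} {Z : Finset A} (hZ : Z ∈ H.E) :
    ∃ M ∈ H.reduction.E, Z ⊆ M := by
  obtain ⟨M, hZM, hM⟩ := H.E.exists_le_maximal hZ
  exact ⟨M, Finset.mem_filter.2 ⟨hM.prop, fun ⟨_, hY, hMY⟩ => hM.not_gt hY hMY⟩, hZM⟩

end FinHypergraph

/- Give each `H`-edge `X` the cylinder (fixed arbitrary values off `W`) over the marginal on `X ∩ W`
of the bag of an `H'`-edge covering `X ∩ W`. These cylinders are pairwise consistent, and a global
witness for them marginalises to one for the original bags, because a bag on `M ⊇ Z` agrees on `Z`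
with any bag on `Z` consistent with it. -/
theorem LGCBags.of_traces {D : A → Type} [∀ a, Nonempty (D a)] {H H' : FinHypergraph A}
    (W : Finset A) (hLGC : LGCBags D H) (htrace : ∀ Z ∈ H'.E, ∃ X ∈ H.E, X ∩ W = Z)
    (hcover : ∀ X ∈ H.E, ∃ M ∈ H'.E, X ∩ W ⊆ M) : LGCBags D H' := by
  intro R hR
  choose M hM hXM using hcover
  obtain ⟨T, hT⟩ := hLGC (fun X hX => Bag.extend (Bag.marginal (hXM X hX) (R _ (hM X hX))))
    fun _ _ _ _ => (hR _ _ _ _).extend_marginal_inter _ _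
  have hsup : H'.E.sup id ⊆ H.E.sup id := Finset.sup_le fun Z hZ => by
    obtain ⟨X, hX, rfl⟩ := htrace Z hZ
    exact Finset.inter_subset_left.trans (Finset.le_sup (f := id) hX)
  refine ⟨Bag.marginal hsup T, fun Z hZ => ?_⟩
  obtain ⟨X, hX, rfl⟩ := htrace Z hZ
  calc Bag.marginal _ (Bag.marginal hsup T)
      = Bag.marginal Finset.inter_subset_left (Bag.marginal (Finset.le_sup (f := id) hX) T) := by
        rw [Bag.marginal_marginal, Bag.marginal_marginal]
    _ = Bag.marginal (hXM X hX) (R _ (hM X hX)) := by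
        rw [hT, Bag.marginal_extend_of_subset]
    _ = R (X ∩ W) hZ := (hR _ _ _ _).marginal_eq_of_subset _

/-- if a hypergraph `H` has the local-to-global consistency property for bags,
then for every `W ⊆ V` so does the reduction of the hypergraph induced by `W` on `H`. -/
theorem stmt12 {D : A → Type} [∀ a : A, Nonempty (D a)] (H : FinHypergraph A)
    (hE : ∀ X ∈ H.E, X ⊆ H.V ∧ X.Nonempty)
    (hLGC : LGCBags D H) :
    ∀ W ⊆ H.V, LGCBags D ((H.induce W).reduction) := by
  intro W _
  rcases ((H.induce W).reduction.E).eq_empty_or_nonempty with hempty | ⟨Z₀, hZ₀⟩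
  · exact fun _ _ => ⟨0, fun X hX => absurd hX (hempty ▸ Finset.notMem_empty X)⟩
  refine hLGC.of_traces W (fun Z hZ => (FinHypergraph.mem_induce_E.1
    ((H.induce W).reduction_E_subset hZ)).1) fun X hX => ?_
  rcases (X ∩ W).eq_empty_or_nonempty with hXW | hXW
  · exact ⟨Z₀, hZ₀, hXW ▸ Finset.empty_subset Z₀⟩
  · exact FinHypergraph.exists_mem_reduction_superset
      (FinHypergraph.mem_induce_E.2 ⟨⟨X, hX, rfl⟩, hXW⟩)
end

section
/- Let X_1, …, X_m be finite sets of attributes satisfying the running intersection property in this order: for every i with 2 ≤ i ≤ m there exists j < i such that X_i ∩ (X_1 ∪ ⋯ ∪ X_{i-1}) ⊆ X_j. If R_1, …, R_m are pairwise consistent bags over X_1, …, X_m, then there exists a bag T witnessing their global consistency whose support size satisfies |Supp(T)| ≤ Σ_{i=1}^m |Supp(R_i)|. -/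
variable {A : Type} [DecidableEq A]

set_option linter.unusedSectionVars false
open Finsupp

lemma apply_le_mapDomain {α γ : Type*} (p : α → γ) (f : α →₀ ℕ) (a : α) :
    f a ≤ (f.mapDomain p) (p a) := by
  classical
  conv_rhs => rw [← Finsupp.single_add_erase a f]
  rw [Finsupp.mapDomain_add, Finsupp.mapDomain_single, Finsupp.add_apply,
    Finsupp.single_apply, if_pos rfl]
  exact Nat.le_add_right _ _

lemma coupling {α β γ : Type*} (p : α → γ) (q : β → γ) (f : α →₀ ℕ) (g : β →₀ ℕ)
    (hfg : f.mapDomain p = g.mapDomain q) :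
    ∃ h : α × β →₀ ℕ, h.mapDomain Prod.fst = f ∧ h.mapDomain Prod.snd = g ∧
      (∀ x ∈ h.support, p x.1 = q x.2) ∧
      h.support.card ≤ f.support.card + g.support.card := by
  classical
  obtain ⟨n, hn⟩ : ∃ n, f.support.card + g.support.card ≤ n := ⟨_, le_rfl⟩
  induction n generalizing f g with
  | zero =>
    have hf : f = 0 := by
      have : f.support.card = 0 := by omega
      simpa [Finset.card_eq_zero, Finsupp.support_eq_empty] using this
    have hg : g = 0 := by
      have : g.support.card = 0 := by omega
      simpa [Finset.card_eq_zero, Finsupp.support_eq_empty] using this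
    exact ⟨0, by simp [hf, hg]⟩
  | succ n ih =>
    by_cases hf0 : f = 0
    · have hg : g = 0 := by
        by_contra hg0
        obtain ⟨b, hb⟩ := Finsupp.ne_iff.mp hg0
        simp only [Finsupp.coe_zero, Pi.zero_apply] at hb
        have := apply_le_mapDomain q g b
        rw [← hfg, hf0] at this
        simp at this
        omega
      exact ⟨0, by simp [hf0, hg]⟩
    · obtain ⟨a, ha⟩ := Finsupp.ne_iff.mp hf0
      simp only [Finsupp.coe_zero, Pi.zero_apply] at ha
      have hale : f a ≤ (g.mapDomain q) (p a) := hfg ▸ apply_le_mapDomain p f a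
      have hmem : p a ∈ (g.mapDomain q).support := by
        rw [Finsupp.mem_support_iff]; omega
      obtain ⟨b, hb, hqb⟩ := Finset.mem_image.mp (Finsupp.mapDomain_support hmem)
      rw [Finsupp.mem_support_iff] at hb
      set k := min (f a) (g b) with hk
      have hk0 : 0 < k := by omega
      have hkf : Finsupp.single a k ≤ f := Finsupp.single_le_iff.mpr (by omega)
      have hkg : Finsupp.single b k ≤ g := Finsupp.single_le_iff.mpr (by omega)
      set f' := f - Finsupp.single a k with hf'
      set g' := g - Finsupp.single b k with hg'
      have hfe : f' + Finsupp.single a k = f := tsub_add_cancel_of_le hkf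
      have hge : g' + Finsupp.single b k = g := tsub_add_cancel_of_le hkg
      have hfg' : f'.mapDomain p = g'.mapDomain q := by
        have h1 : f'.mapDomain p + Finsupp.single (p a) k = f.mapDomain p := by
          rw [← Finsupp.mapDomain_single (f := p) (a := a) (b := k), ← Finsupp.mapDomain_add, hfe]
        have h2 : g'.mapDomain q + Finsupp.single (p a) k = g.mapDomain q := by
          rw [← hqb, ← Finsupp.mapDomain_single (f := q) (a := b) (b := k),
            ← Finsupp.mapDomain_add, hge]
        have := h1.trans (hfg.trans h2.symm)
        exact add_right_cancel this
      have hf'sub : f'.support ⊆ f.support := by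
        intro x hx
        rw [Finsupp.mem_support_iff] at hx ⊢
        intro h0
        apply hx
        have : f' x ≤ f x := by
          rw [hf', Finsupp.tsub_apply]; omega
        omega
      have hg'sub : g'.support ⊆ g.support := by
        intro x hx
        rw [Finsupp.mem_support_iff] at hx ⊢
        intro h0
        apply hx
        have : g' x ≤ g x := by
          rw [hg', Finsupp.tsub_apply]; omega
        omega
      have hlt : f'.support.card + g'.support.card < f.support.card + g.support.card := by
        rcases min_cases (f a) (g b) with ⟨hmin, _⟩ | ⟨hmin, _⟩
        · have hfa' : f' a = 0 := by rw [hf', Finsupp.tsub_apply, Finsupp.single_eq_same]; omega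
          have : f'.support ⊆ f.support.erase a := by
            intro x hx
            rcases eq_or_ne x a with rfl | hxa
            · rw [Finsupp.mem_support_iff] at hx; omega
            · exact Finset.mem_erase.mpr ⟨hxa, hf'sub hx⟩
          have h1 : f'.support.card < f.support.card :=
            lt_of_le_of_lt (Finset.card_le_card this)
              (Finset.card_erase_lt_of_mem (Finsupp.mem_support_iff.mpr ha))
          have h2 : g'.support.card ≤ g.support.card := Finset.card_le_card hg'sub
          omega
        · have hgb' : g' b = 0 := by rw [hg', Finsupp.tsub_apply, Finsupp.single_eq_same]; omega
          have : g'.support ⊆ g.support.erase b := by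
            intro x hx
            rcases eq_or_ne x b with rfl | hxb
            · rw [Finsupp.mem_support_iff] at hx; omega
            · exact Finset.mem_erase.mpr ⟨hxb, hg'sub hx⟩
          have h1 : g'.support.card < g.support.card :=
            lt_of_le_of_lt (Finset.card_le_card this)
              (Finset.card_erase_lt_of_mem (Finsupp.mem_support_iff.mpr hb))
          have h2 : f'.support.card ≤ f.support.card := Finset.card_le_card hf'sub
          omega
      have hcard : f'.support.card + g'.support.card ≤ n := by omega
      obtain ⟨h', hm1, hm2, hsupp, hc⟩ := ih f' g' hfg' hcard
      refine ⟨h' + Finsupp.single (a, b) k, ?_, ?_, ?_, ?_⟩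
      · rw [Finsupp.mapDomain_add, hm1, Finsupp.mapDomain_single, hfe]
      · rw [Finsupp.mapDomain_add, hm2, Finsupp.mapDomain_single, hge]
      · intro x hx
        have := Finsupp.support_add hx
        rw [Finset.mem_union] at this
        rcases this with h | h
        · exact hsupp x h
        · have := Finsupp.support_single_subset h
          rw [Finset.mem_singleton] at this
          subst this
          exact hqb.symm
      · calc (h' + Finsupp.single (a, b) k).support.card
            ≤ (h'.support ∪ (Finsupp.single (a, b) k).support).card :=
              Finset.card_le_card Finsupp.support_add
          _ ≤ h'.support.card + (Finsupp.single (a, b) k).support.card :=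
              Finset.card_union_le _ _
          _ ≤ (f'.support.card + g'.support.card) + 1 := by
              have h4 : (Finsupp.single (a, b) k).support.card ≤ 1 := by
                have := Finset.card_le_card
                  (Finsupp.support_single_subset (α := α × β) (a := (a,b)) (b := k))
                simpa using this
              omega
          _ ≤ f.support.card + g.support.card := by omega
variable {D : A → Type}

lemma marginal_marginal {W Z V : Finset A} (h1 : Z ⊆ V) (h2 : V ⊆ W) (h3 : Z ⊆ W)
    (T : Bag D W) : (T.marginal h2).marginal h1 = T.marginal h3 := by
  unfold Bag.marginal
  rw [← Finsupp.mapDomain_comp]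
  rfl

lemma marginal_refl {Z : Finset A} (h : Z ⊆ Z) (T : Bag D Z) : T.marginal h = T := by
  unfold Bag.marginal
  have : Tup.restrict (D := D) h = id := rfl
  rw [this, Finsupp.mapDomain_id]

lemma card_marginal_le {X Z : Finset A} (h : Z ⊆ X) (T : Bag D X) :
    (T.marginal h).support.card ≤ T.support.card := by
  classical
  calc (T.marginal h).support.card
      ≤ (T.support.image (Tup.restrict h)).card :=
        Finset.card_le_card Finsupp.mapDomain_support
    _ ≤ T.support.card := Finset.card_image_le

/-- Glue a `U`-tuple and a `Y`-tuple to a `U ∪ Y`-tuple, preferring `U`. -/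
noncomputable def glue {U Y : Finset A} (x : Tup D U × Tup D Y) : Tup D (U ∪ Y) :=
  fun a => if ha : a.1 ∈ U then x.1 ⟨a.1, ha⟩
    else x.2 ⟨a.1, by rcases Finset.mem_union.mp a.2 with h | h; exact absurd h ha; exact h⟩

lemma join {U Y : Finset A} (T : Bag D U) (S : Bag D Y)
    (hagree : T.marginal Finset.inter_subset_left =
      S.marginal (Finset.inter_subset_right : U ∩ Y ⊆ Y)) :
    ∃ W : Bag D (U ∪ Y), W.marginal Finset.subset_union_left = T ∧
      W.marginal Finset.subset_union_right = S ∧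
      W.support.card ≤ T.support.card + S.support.card := by
  classical
  obtain ⟨h, hm1, hm2, hsupp, hc⟩ := coupling
    (Tup.restrict (D := D) (Finset.inter_subset_left : U ∩ Y ⊆ U))
    (Tup.restrict (Finset.inter_subset_right : U ∩ Y ⊆ Y)) T S hagree
  refine ⟨h.mapDomain glue, ?_, ?_, ?_⟩
  · show Finsupp.mapDomain (Tup.restrict _) (h.mapDomain glue) = T
    rw [← Finsupp.mapDomain_comp]
    have : (Tup.restrict (D := D) (Finset.subset_union_left : U ⊆ U ∪ Y)) ∘ glue
        = Prod.fst := by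
      funext x
      funext a
      show glue x ⟨a.1, _⟩ = x.1 a
      unfold glue
      rw [dif_pos a.2]
    rw [this, hm1]
  · show Finsupp.mapDomain (Tup.restrict _) (h.mapDomain glue) = S
    rw [← Finsupp.mapDomain_comp]
    rw [Finsupp.mapDomain_congr (g := Prod.snd), hm2]
    intro x hx
    funext a
    show glue x ⟨a.1, _⟩ = x.2 a
    unfold glue
    split
    · next ha =>
      have := congrFun (hsupp x hx) ⟨a.1, Finset.mem_inter.mpr ⟨ha, a.2⟩⟩
      exact this
    · rfl
  · calc (h.mapDomain glue).support.card
        ≤ (h.support.image glue).card := Finset.card_le_card Finsupp.mapDomain_support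
      _ ≤ h.support.card := Finset.card_image_le
      _ ≤ _ := hc

lemma Iio_castSucc_eq {m : ℕ} (i : Fin m) :
    Finset.Iio (Fin.castSucc i) = (Finset.Iio i).image Fin.castSucc := by
  ext a
  simp only [Finset.mem_Iio, Finset.mem_image, Fin.lt_def]
  constructor
  · intro ha
    have ham : (a : ℕ) < m := lt_of_lt_of_le (by simpa using ha) (Nat.le_of_lt i.isLt)
    exact ⟨⟨a.1, ham⟩, by simpa using ha, by apply Fin.ext; simp⟩
  · rintro ⟨b, hb, rfl⟩
    simpa using hb

lemma Iio_last_eq {m : ℕ} :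
    Finset.Iio (Fin.last m) = (Finset.univ : Finset (Fin m)).image Fin.castSucc := by
  ext a
  simp only [Finset.mem_Iio, Finset.mem_image, Finset.mem_univ, true_and, Fin.lt_def,
    Fin.val_last]
  constructor
  · intro ha
    exact ⟨⟨a.1, ha⟩, by apply Fin.ext; simp⟩
  · rintro ⟨b, rfl⟩
    simpa using b.isLt

lemma aux : ∀ (m : ℕ) (X : Fin m → Finset A)
    (_ : ∀ i : Fin m, 0 < (i : ℕ) → ∃ j < i, X i ∩ (Finset.Iio i).sup X ⊆ X j)
    (R : ∀ i, Bag D (X i))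
    (_ : ∀ i j (Z : Finset A) (h1 : Z ⊆ X i) (h2 : Z ⊆ X j),
      (R i).marginal h1 = (R j).marginal h2)
    (V : Finset A) (hXV : ∀ i, X i ⊆ V) (_ : V ⊆ Finset.univ.sup X),
    ∃ T : Bag D V, (∀ i, T.marginal (hXV i) = R i) ∧
      T.support.card ≤ ∑ i, (R i).support.card := by
  intro m
  induction m with
  | zero =>
    intro X hRIP R hagree V hXV hVX
    exact ⟨0, fun i => i.elim0, by simp [Bag.marginal]⟩
  | succ m ih =>
    intro X hRIP R hagree V hXV hVX
    rcases Nat.eq_zero_or_pos m with rfl | hm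
    · -- single relation
      have hsub : V ⊆ X 0 := hVX.trans (Finset.sup_le fun i _ =>
        le_of_eq (congrArg X (Fin.fin_one_eq_zero i)))
      refine ⟨(R 0).marginal hsub, ?_, ?_⟩
      · intro i
        have hi : i = 0 := Fin.fin_one_eq_zero i
        subst hi
        rw [marginal_marginal (hXV 0) hsub (Finset.Subset.refl _) (R 0)]
        exact marginal_refl _ _
      · calc ((R 0).marginal hsub).support.card ≤ (R 0).support.card :=
              card_marginal_le _ _
          _ ≤ _ := by rw [Fin.sum_univ_one]
    · -- m ≥ 1
      set X' : Fin m → Finset A := fun i => X i.castSucc with hX'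
      set R' : ∀ i, Bag D (X' i) := fun i => R i.castSucc with hR'
      set V' : Finset A := Finset.univ.sup X' with hV'
      have hRIP' : ∀ i : Fin m, 0 < (i : ℕ) →
          ∃ j < i, X' i ∩ (Finset.Iio i).sup X' ⊆ X' j := by
        intro i hi
        obtain ⟨j, hj, hs⟩ := hRIP i.castSucc (by simpa using hi)
        have hjm : (j : ℕ) < m := lt_of_lt_of_le hj (by simp [Fin.le_def])
        refine ⟨⟨j.1, hjm⟩, by simpa [Fin.lt_def] using hj, ?_⟩
        have h1 : X' ⟨j.1, hjm⟩ = X j := congrArg X (Fin.ext rfl)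
        have h2 : (Finset.Iio i).sup X' = (Finset.Iio i.castSucc).sup X := by
          rw [Iio_castSucc_eq, Finset.sup_image]
          rfl
        rw [h1, h2]
        exact hs
      have hagree' : ∀ i j (Z : Finset A) (h1 : Z ⊆ X' i) (h2 : Z ⊆ X' j),
          (R' i).marginal h1 = (R' j).marginal h2 := fun i j Z h1 h2 =>
        hagree i.castSucc j.castSucc Z h1 h2
      obtain ⟨T', hT'm, hT'c⟩ := ih X' hRIP' R' hagree' V'
        (fun i => Finset.le_sup (Finset.mem_univ i)) (Finset.Subset.refl _)
      -- join T' with R (last m)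
      obtain ⟨j, hj, hs⟩ := hRIP (Fin.last m) (by simpa using hm)
      have hjm : (j : ℕ) < m := by simpa [Fin.lt_def] using hj
      set j' : Fin m := ⟨j.1, hjm⟩ with hj'
      have hjc : Fin.castSucc j' = j := Fin.ext rfl
      have hsup : (Finset.Iio (Fin.last m)).sup X = V' := by
        rw [Iio_last_eq, Finset.sup_image]
        rfl
      have hs' : X (Fin.last m) ∩ V' ⊆ X' j' := by
        rw [show X' j' = X j from congrArg X hjc, ← hsup]
        exact hs
      have hZj : V' ∩ X (Fin.last m) ⊆ X' j' := by
        rw [Finset.inter_comm]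
        exact hs'
      have e1 : T'.marginal (Finset.inter_subset_left :
          V' ∩ X (Fin.last m) ⊆ V') = (R' j').marginal hZj := by
        rw [← hT'm j']
        exact (marginal_marginal hZj (Finset.le_sup (Finset.mem_univ j'))
          Finset.inter_subset_left T').symm
      have e2 : (R' j').marginal hZj = (R (Fin.last m)).marginal
          (Finset.inter_subset_right : V' ∩ X (Fin.last m) ⊆ X (Fin.last m)) :=
        hagree (Fin.castSucc j') (Fin.last m) _ hZj Finset.inter_subset_right
      obtain ⟨W, hW1, hW2, hWc⟩ := join T' (R (Fin.last m)) (e1.trans e2)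
      have hXU : ∀ i : Fin (m + 1), X i ⊆ V' ∪ X (Fin.last m) := by
        intro i
        induction i using Fin.lastCases with
        | last => exact Finset.subset_union_right
        | cast i' =>
          exact (Finset.le_sup (Finset.mem_univ i') : X' i' ⊆ V').trans
            Finset.subset_union_left
      have hVW : V ⊆ V' ∪ X (Fin.last m) := hVX.trans (Finset.sup_le fun i _ => hXU i)
      refine ⟨W.marginal hVW, ?_, ?_⟩
      · intro i
        rw [marginal_marginal (hXV i) hVW (hXU i) W]
        induction i using Fin.lastCases with
        | last => exact hW2
        | cast i' =>
          rw [← marginal_marginal (Finset.le_sup (Finset.mem_univ i') : X' i' ⊆ V')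
            Finset.subset_union_left (hXU i'.castSucc) W, hW1]
          exact hT'm i'
      · calc (W.marginal hVW).support.card ≤ W.support.card := card_marginal_le _ _
          _ ≤ T'.support.card + (R (Fin.last m)).support.card := hWc
          _ ≤ (∑ i, (R' i).support.card) + (R (Fin.last m)).support.card := by omega
          _ = ∑ i, (R i).support.card :=
              (Fin.sum_univ_castSucc (fun i : Fin (m+1) => (R i).support.card)).symm

/-- if the schemas `X 0, …, X (m-1)` satisfy the running intersection property
in this order and the bags `R i` over them are pairwise consistent, then there is a bag `T`
witnessing their global consistency whose support size is at most the sum of the support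
sizes of the `R i`. -/
theorem stmt17 {D : A → Type} {m : ℕ} (X : Fin m → Finset A)
    (hRIP : ∀ i : Fin m, 0 < (i : ℕ) →
      ∃ j < i, X i ∩ (Finset.Iio i).sup X ⊆ X j)
    (R : ∀ i, Bag D (X i))
    (hpair : ∀ i j, Consistent (R i) (R j)) :
    ∃ T : Bag D (Finset.univ.sup X),
      (∀ i, Bag.marginal (Finset.le_sup (Finset.mem_univ i)) T = R i) ∧
      T.support.card ≤ ∑ i, (R i).support.card := by
  have hagree : ∀ i j (Z : Finset A) (h1 : Z ⊆ X i) (h2 : Z ⊆ X j),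
      (R i).marginal h1 = (R j).marginal h2 := by
    intro i j Z h1 h2
    obtain ⟨W, hW1, hW2⟩ := hpair i j
    rw [← hW1, ← hW2,
      marginal_marginal h1 Finset.subset_union_left
        (h1.trans Finset.subset_union_left) W,
      marginal_marginal h2 Finset.subset_union_right
        (h1.trans Finset.subset_union_left) W]
  exact aux m X hRIP R hagree _ (fun i => Finset.le_sup (Finset.mem_univ i))
    (Finset.Subset.refl _)
end
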